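/- For every integer n ≥ 5, every cycle of D_n that contains no edge of the matching M has length at least n. -/

import Mathlib

/-- Vertices of `D n`: `Sum.inl i` is `u_{i+1}`, `Sum.inr (Sum.inl i)` is `v_{i+1}`
(for `i ∈ Fin n`), and `Sum.inr (Sum.inr j)` is `w_{j+1}` (for `j ∈ Fin (2n)`);
indices are shifted by one from the (1-based) paper notation. -/
abbrev DV (n : ℕ) := Fin n ⊕ (Fin n ⊕ Fin (2*n))

/-- Generating relation for the edges of `D n`: the cycles `u₁ u₂ … uₙ u₁`,
`v₁ v₂ … vₙ v₁`, `w₁ w₂ … w_{2n} w₁`, together with the edges `vᵢ w_{2i-1}` and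
`uᵢ w_{2i}` for `i ∈ {1, …, n}` (in 0-based indexing: `vᵢ w_{2i}` and `uᵢ w_{2i+1}`). -/
def DRel (n : ℕ) : DV n → DV n → Prop
  | Sum.inl i, Sum.inl j => (j : ℕ) = ((i : ℕ) + 1) % n
  | Sum.inr (Sum.inl i), Sum.inr (Sum.inl j) => (j : ℕ) = ((i : ℕ) + 1) % n
  | Sum.inr (Sum.inr i), Sum.inr (Sum.inr j) => (j : ℕ) = ((i : ℕ) + 1) % (2*n)
  | Sum.inr (Sum.inl i), Sum.inr (Sum.inr j) => (j : ℕ) = 2*(i : ℕ)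
  | Sum.inl i, Sum.inr (Sum.inr j) => (j : ℕ) = 2*(i : ℕ) + 1
  | _, _ => False

/-- The graph `D n`. -/
def D (n : ℕ) : SimpleGraph (DV n) := SimpleGraph.fromRel (DRel n)

/-- The perfect matching `M` of `D n`, consisting of the edges `vᵢ w_{2i-1}` and
`uᵢ w_{2i}` for `i ∈ {1, …, n}` (in 0-based indexing: `vᵢ w_{2i}` and `uᵢ w_{2i+1}`). -/
def DM (n : ℕ) : Set (Sym2 (DV n)) :=
  {e | ∃ i : Fin n,
    e = s(Sum.inr (Sum.inl i), Sum.inr (Sum.inr ⟨2*(i : ℕ), by have := i.isLt; omega⟩)) ∨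
    e = s(Sum.inl i, Sum.inr (Sum.inr ⟨2*(i : ℕ) + 1, by have := i.isLt; omega⟩))}

/-- successor function -/
def nxt (n : ℕ) : DV n → DV n
  | Sum.inl i => Sum.inl ⟨((i : ℕ) + 1) % n, Nat.mod_lt _ i.pos⟩
  | Sum.inr (Sum.inl i) => Sum.inr (Sum.inl ⟨((i : ℕ) + 1) % n, Nat.mod_lt _ i.pos⟩)
  | Sum.inr (Sum.inr j) => Sum.inr (Sum.inr ⟨((j : ℕ) + 1) % (2*n), Nat.mod_lt _ j.pos⟩)

lemma succ_mod_inj {m a b : ℕ} (ha : a < m) (hb : b < m) (h : (a+1) % m = (b+1) % m) : a = b := by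
  have h1 : (a+1) % m = if a+1 = m then 0 else a+1 := by
    split
    · simp [*]
    · exact Nat.mod_eq_of_lt (by omega)
  have h2 : (b+1) % m = if b+1 = m then 0 else b+1 := by
    split
    · simp [*]
    · exact Nat.mod_eq_of_lt (by omega)
  rw [h1, h2] at h
  split_ifs at h <;> omega

lemma nxt_inj {n : ℕ} {x y : DV n} (h : nxt n x = nxt n y) : x = y := by
  rcases x with i | i | i <;> rcases y with j | j | j <;> simp [nxt] at h ⊢ <;>
    exact Fin.ext (succ_mod_inj (by omega) (by omega) h)

lemma drel_char {n : ℕ} {x y : DV n} (h : DRel n x y) (hm : s(x, y) ∉ DM n) :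
    y = nxt n x := by
  rcases x with i | i | i <;> rcases y with j | j | j <;> simp [DRel] at h
  · exact congrArg Sum.inl (Fin.ext h)
  · have hj : j = (⟨2*(i : ℕ) + 1, by have := i.isLt; omega⟩ : Fin (2*n)) := Fin.ext h
    exact absurd ⟨i, Or.inr (by rw [hj])⟩ hm
  · exact congrArg (Sum.inr ∘ Sum.inl) (Fin.ext h)
  · have hj : j = (⟨2*(i : ℕ), by have := i.isLt; omega⟩ : Fin (2*n)) := Fin.ext h
    exact absurd ⟨i, Or.inl (by rw [hj])⟩ hm
  · exact congrArg (Sum.inr ∘ Sum.inr) (Fin.ext h)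

lemma edge_char {n : ℕ} {x y : DV n} (h : (D n).Adj x y) (hm : s(x, y) ∉ DM n) :
    y = nxt n x ∨ x = nxt n y := by
  rw [D, SimpleGraph.fromRel_adj] at h
  rcases h.2 with h1 | h1
  · exact Or.inl (drel_char h1 hm)
  · exact Or.inr (drel_char h1 (by rwa [Sym2.eq_swap] at hm))

lemma fwd {n : ℕ} {a b : DV n} (p : (D n).Walk a b) :
    p.IsTrail → (∀ e ∈ p.edges, e ∉ DM n) → ∀ z : DV n, a = nxt n z →
      s(z, a) ∉ p.edges → b = (nxt n)^[p.length] a := by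
  induction p with
  | nil => intro _ _ _ _ _; rfl
  | @cons u v w h q ih =>
    intro ht hav z hz hne
    rcases edge_char h (hav _ (by simp)) with h1 | h1
    · rw [SimpleGraph.Walk.isTrail_cons] at ht
      have key := ih ht.1 (fun e he => hav e (by simp [he])) u h1 ht.2
      rw [SimpleGraph.Walk.length_cons]
      exact (key.trans (congrArg (nxt n)^[q.length] h1)).trans
        (Function.iterate_succ_apply (nxt n) q.length u).symm
    · exfalso
      have hzv : z = v := nxt_inj (hz ▸ h1)
      exact hne (by rw [hzv, Sym2.eq_swap]; simp)

lemma bwd {n : ℕ} {a b : DV n} (p : (D n).Walk a b) :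
    p.IsTrail → (∀ e ∈ p.edges, e ∉ DM n) → ∀ z : DV n, z = nxt n a →
      s(z, a) ∉ p.edges → a = (nxt n)^[p.length] b := by
  induction p with
  | nil => intro _ _ _ _ _; rfl
  | @cons u v w h q ih =>
    intro ht hav z hz hne
    rcases edge_char h (hav _ (by simp)) with h1 | h1
    · exfalso
      have hzv : z = v := hz.trans h1.symm
      exact hne (by rw [hzv, Sym2.eq_swap]; simp)
    · rw [SimpleGraph.Walk.isTrail_cons] at ht
      have key := ih ht.1 (fun e he => hav e (by simp [he])) u h1 ht.2
      rw [SimpleGraph.Walk.length_cons]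
      exact h1.trans ((congrArg (nxt n) key).trans
        (Function.iterate_succ_apply' (nxt n) q.length w).symm)

lemma iter_inl {n : ℕ} (k : ℕ) (i : Fin n) :
    (nxt n)^[k] (Sum.inl i) = Sum.inl ⟨((i : ℕ) + k) % n, Nat.mod_lt _ i.pos⟩ := by
  induction k with
  | zero => simp [Nat.mod_eq_of_lt i.isLt]
  | succ k ih =>
    rw [Function.iterate_succ_apply', ih]
    simp [nxt, Nat.mod_add_mod, Nat.add_assoc]

lemma iter_inrl {n : ℕ} (k : ℕ) (i : Fin n) :
    (nxt n)^[k] (Sum.inr (Sum.inl i) : DV n)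
      = Sum.inr (Sum.inl ⟨((i : ℕ) + k) % n, Nat.mod_lt _ i.pos⟩) := by
  induction k with
  | zero => simp [Nat.mod_eq_of_lt i.isLt]
  | succ k ih =>
    rw [Function.iterate_succ_apply', ih]
    simp [nxt, Nat.mod_add_mod, Nat.add_assoc]

lemma iter_inrr {n : ℕ} (k : ℕ) (j : Fin (2*n)) :
    (nxt n)^[k] (Sum.inr (Sum.inr j) : DV n)
      = Sum.inr (Sum.inr ⟨((j : ℕ) + k) % (2*n), Nat.mod_lt _ j.pos⟩) := by
  induction k with
  | zero => simp [Nat.mod_eq_of_lt j.isLt]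
  | succ k ih =>
    rw [Function.iterate_succ_apply', ih]
    simp [nxt, Nat.mod_add_mod, Nat.add_assoc]

lemma mod_cancel {m a L : ℕ} (ha : a < m) (h : a = (a + L) % m) (hL : 0 < L) : m ≤ L := by
  have h1 : a % m = (a + L) % m := by rw [Nat.mod_eq_of_lt ha]; exact h
  have h2 : m ∣ L := by
    have := (Nat.modEq_iff_dvd' (Nat.le_add_right a L)).mp h1
    simpa using this
  exact Nat.le_of_dvd hL h2

/-- For every integer `n ≥ 5`, every cycle of `D n` containing no edge of the
matching `M` has length at least `n`. -/
theorem stmt_8 (n : ℕ) (hn : 5 ≤ n) :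
    ∀ (v : DV n) (c : (D n).Walk v v), c.IsCycle →
      (∀ e ∈ c.edges, e ∉ DM n) → n ≤ c.length := by
  intro v c hc hav
  have h3 := hc.three_le_length
  have key : v = (nxt n)^[c.length] v := by
    cases c with
    | nil => simp at h3
    | @cons u x w h q =>
      have ht := hc.isCircuit.isTrail
      rw [SimpleGraph.Walk.isTrail_cons] at ht
      rw [SimpleGraph.Walk.length_cons]
      rcases edge_char h (hav _ (by simp)) with h1 | h1
      · have key := fwd q ht.1 (fun e he => hav e (by simp [he])) v h1 ht.2
        exact (key.trans (congrArg (nxt n)^[q.length] h1)).trans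
          (Function.iterate_succ_apply (nxt n) q.length v).symm
      · have key := bwd q ht.1 (fun e he => hav e (by simp [he])) v h1 ht.2
        exact h1.trans ((congrArg (nxt n) key).trans
          (Function.iterate_succ_apply' (nxt n) q.length v).symm)
  rcases v with i | i | j
  · rw [iter_inl] at key
    have hk : (i : ℕ) = ((i : ℕ) + c.length) % n :=
      congrArg Fin.val (Sum.inl.inj key)
    exact mod_cancel i.isLt hk (by omega)
  · rw [iter_inrl] at key
    have hk : (i : ℕ) = ((i : ℕ) + c.length) % n :=
      congrArg Fin.val (Sum.inl.inj (Sum.inr.inj key))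
    exact mod_cancel i.isLt hk (by omega)
  · rw [iter_inrr] at key
    have hk : (j : ℕ) = ((j : ℕ) + c.length) % (2*n) :=
      congrArg Fin.val (Sum.inr.inj (Sum.inr.inj key))
    have := mod_cancel j.isLt hk (by omega)
    omega
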